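/- Let z = (α, β, M) ∈ Z with |p| ≤ rs, |α| < r and |β| < s. Suppose there exist a constant c with 0 < c ≤ G(z) and nonzero vectors ᾱ, β̄ ∈ ℝ³ such that: (i) M₀(z) + c·(ᾱ/|ᾱ|)⊗(β̄/|β̄|) = 0; (ii) (β·β̄)·(r² − |α|²)/(s² − |β|²) = α·ᾱ and (r² − |α|²)/(s² − |β|²) = |ᾱ|²/|β̄|²; and (iii) (α − β)·(ᾱ × β̄) = 0, where × is the cross product on ℝ³. Then z ∈ K_{r,s}^{Λ,3}. -/

import Mathlib

open Matrix

noncomputable section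

/-- Vectors in ℝ³. -/
abbrev V3 := Fin 3 → ℝ
/-- 3×3 real matrices. -/
abbrev Mat3 := Matrix (Fin 3) (Fin 3) ℝ
/-- The state space Z = ℝ³ × ℝ³ × ℝ^{3×3}. -/
abbrev Z := V3 × V3 × Mat3

/-- Euclidean dot product on ℝ³. -/
def dot3 (u v : V3) : ℝ := ∑ i, u i * v i
/-- Euclidean norm on ℝ³. -/
def norm3 (v : V3) : ℝ := Real.sqrt (dot3 v v)
/-- Outer (tensor) product u ⊗ v. -/
def outer (u v : V3) : Mat3 := Matrix.vecMulVec u v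

/-- The constraint set K_{r,s}. -/
def Krs (r s p : ℝ) : Set Z :=
  {z | z.2.2 = outer z.1 z.2.1 + p • (1 : Mat3) ∧ norm3 z.1 = r ∧ norm3 z.2.1 = s}

/-- The wave cone Λ. -/
def waveCone : Set Z :=
  {z | ∃ (ξ : V3) (c : ℝ), ξ ≠ 0 ∧ z.2.2 *ᵥ ξ + c • z.1 = 0 ∧
    z.2.2ᵀ *ᵥ ξ + c • z.2.1 = 0 ∧ dot3 z.1 ξ = 0 ∧ dot3 z.2.1 ξ = 0}

/-- M₀(z) = α⊗β − M + p·Id. -/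
def M0 (p : ℝ) (z : Z) : Mat3 := outer z.1 z.2.1 - z.2.2 + p • (1 : Mat3)

/-- G(z) = √((r² − |α|²)(s² − |β|²)). -/
def Gfun (r s : ℝ) (z : Z) : ℝ :=
  Real.sqrt ((r ^ 2 - norm3 z.1 ^ 2) * (s ^ 2 - norm3 z.2.1 ^ 2))

/-- Iterated lamination sets K_{r,s}^{Λ,i}. -/
def lamSet (r s p : ℝ) : ℕ → Set Z
  | 0 => Krs r s p
  | (i + 1) => {z | ∃ zb ∈ waveCone, ∃ t₁ t₂ : ℝ, t₁ ≤ 0 ∧ 0 ≤ t₂ ∧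
      z + t₁ • zb ∈ lamSet r s p i ∧ z + t₂ • zb ∈ lamSet r s p i}

/-- The old Mathlib `Matrix.PosSemidef.sqrt` (removed), with its old definition. -/
def psdSqrtOld {A : Mat3} (hA : A.PosSemidef) : Mat3 :=
  hA.isHermitian.eigenvectorUnitary.1 * diagonal ((↑) ∘ Real.sqrt ∘ hA.isHermitian.eigenvalues) *
    (star hA.isHermitian.eigenvectorUnitary : Mat3)

/-- Nuclear norm: trace of the PSD square root of AᵀA. -/
def nuclearNorm (A : Mat3) : ℝ := (psdSqrtOld (Matrix.posSemidef_conjTranspose_mul_self A)).trace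

/-- f₀(A) = (A₂₃, A₃₁, A₁₂) (0-indexed: (A 1 2, A 2 0, A 0 1)). -/
def f0 (A : Mat3) : V3 := ![A 1 2, A 2 0, A 0 1]

/-- Frobenius norm of a matrix. -/
def frobNorm (A : Mat3) : ℝ := Real.sqrt (∑ i, ∑ j, A i j ^ 2)

/-- Λ-convexity of a set. -/
def LambdaConvex (S : Set Z) : Prop :=
  ∀ z₁ ∈ S, ∀ z₂ ∈ S, z₁ - z₂ ∈ waveCone →
    ∀ t : ℝ, t ∈ Set.Icc (0 : ℝ) 1 → z₁ + t • (z₂ - z₁) ∈ S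

/-- The Λ-convex hull of K_{r,s}: the intersection of all Λ-convex sets containing it. -/
def lambdaHull (r s p : ℝ) : Set Z := ⋂₀ {S : Set Z | LambdaConvex S ∧ Krs r s p ⊆ S}

namespace SAux


lemma dot3_eq (u v : V3) : dot3 u v = u 0 * v 0 + u 1 * v 1 + u 2 * v 2 := by
  simp [dot3, Fin.sum_univ_three]

lemma dot3_self_nonneg (v : V3) : 0 ≤ dot3 v v := by
  rw [dot3_eq]; nlinarith [sq_nonneg (v 0), sq_nonneg (v 1), sq_nonneg (v 2)]

lemma norm3_sq (v : V3) : norm3 v ^ 2 = dot3 v v := by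
  rw [norm3, Real.sq_sqrt (dot3_self_nonneg v)]

lemma dot3_self_pos (v : V3) (hv : v ≠ 0) : 0 < dot3 v v := by
  rcases (dot3_self_nonneg v).eq_or_lt with h | h
  · exfalso; apply hv
    rw [dot3_eq] at h
    funext i
    have h0 : v 0 = 0 := by nlinarith [sq_nonneg (v 0), sq_nonneg (v 1), sq_nonneg (v 2)]
    have h1 : v 1 = 0 := by nlinarith [sq_nonneg (v 0), sq_nonneg (v 1), sq_nonneg (v 2)]
    have h2 : v 2 = 0 := by nlinarith [sq_nonneg (v 0), sq_nonneg (v 1), sq_nonneg (v 2)]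
    fin_cases i <;> simpa
  · exact h

lemma norm3_nonneg (v : V3) : 0 ≤ norm3 v := Real.sqrt_nonneg _

lemma norm3_pos (v : V3) (hv : v ≠ 0) : 0 < norm3 v :=
  Real.sqrt_pos.mpr (dot3_self_pos v hv)

lemma norm3_eq_of (X : V3) (r : ℝ) (hr : 0 ≤ r) (h : dot3 X X = r ^ 2) : norm3 X = r := by
  rw [norm3, h, Real.sqrt_sq hr]

lemma outer_apply (u v : V3) (i j : Fin 3) : outer u v i j = u i * v j := rfl

lemma outer_mulVec (u v ξ : V3) : outer u v *ᵥ ξ = dot3 v ξ • u := by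
  funext i
  simp [outer, Matrix.mulVec, dotProduct, Matrix.vecMulVec_apply, dot3,
    Fin.sum_univ_three, Pi.smul_apply, smul_eq_mul]
  ring

lemma outer_transpose (u v : V3) : (outer u v)ᵀ = outer v u := by
  ext i j; simp [outer, Matrix.transpose_apply, Matrix.vecMulVec_apply]; ring

lemma dot3_cross (w a b : V3) : dot3 w (crossProduct a b) =
    w 0 * (a 1 * b 2 - a 2 * b 1) + w 1 * (a 2 * b 0 - a 0 * b 2) + w 2 * (a 0 * b 1 - a 1 * b 0) := by
  rw [cross_apply, dot3_eq]
  simp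

lemma exists_xi (u v w : V3) (h : dot3 w (crossProduct u v) = 0) :
    ∃ ξ : V3, ξ ≠ 0 ∧ dot3 u ξ = 0 ∧ dot3 v ξ = 0 ∧ dot3 w ξ = 0 := by
  set M : Mat3 := Matrix.of ![u, v, w] with hM
  have hdet : M.det = 0 := by
    rw [dot3_cross] at h
    rw [Matrix.det_fin_three]
    simp only [hM, Matrix.of_apply, Matrix.cons_val', Matrix.cons_val_zero, Matrix.cons_val_one,
      Matrix.head_cons, Matrix.empty_val', Matrix.cons_val_fin_one, Matrix.head_fin_const,
      Matrix.cons_val_two, Matrix.tail_cons]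
    linear_combination h
  obtain ⟨ξ, hξ0, hξ⟩ := (Matrix.exists_mulVec_eq_zero_iff).mpr hdet
  have key : ∀ i : Fin 3, dotProduct (M i) ξ = 0 := by
    intro i
    have := congrFun hξ i
    simpa [Matrix.mulVec] using this
  refine ⟨ξ, hξ0, ?_, ?_, ?_⟩
  · have := key 0; simpa [hM, dotProduct, dot3] using this
  · have := key 1; simpa [hM, dotProduct, dot3] using this
  · have := key 2; simpa [hM, dotProduct, dot3] using this

lemma cross_smul_smul (c d : ℝ) (a b : V3) :
    crossProduct (c • a) (d • b) = (c * d) • crossProduct a b := by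
  rw [_root_.map_smul, LinearMap.map_smul₂, smul_smul, mul_comm d c]



lemma dot3_smul_right (c : ℝ) (w x : V3) : dot3 w (c • x) = c * dot3 w x := by
  simp [dot3, Finset.mul_sum]; ring_nf
  exact Finset.sum_congr rfl fun i _ => by ring

lemma dot3_add_left (a b c : V3) : dot3 (a + b) c = dot3 a c + dot3 b c := by
  simp [dot3, ← Finset.sum_add_distrib]
  exact Finset.sum_congr rfl fun i _ => by simp [add_mul]

lemma dot3_smul_left (c : ℝ) (w x : V3) : dot3 (c • w) x = c * dot3 w x := by
  simp [dot3, Finset.mul_sum]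
  exact Finset.sum_congr rfl fun i _ => by simp [mul_assoc]

lemma dot3_comm (a b : V3) : dot3 a b = dot3 b a := by
  simp [dot3]; exact Finset.sum_congr rfl fun i _ => by ring

lemma dot3_sub_left (a b c : V3) : dot3 (a - b) c = dot3 a c - dot3 b c := by
  simp [dot3, ← Finset.sum_sub_distrib]
  exact Finset.sum_congr rfl fun i _ => by ring

lemma dot3_expand (X U : V3) (t : ℝ) :
    dot3 (X + t • U) (X + t • U) = dot3 X X + 2 * t * dot3 X U + t ^ 2 * dot3 U U := by
  simp [dot3, Fin.sum_univ_three]; ring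

lemma dot3_add_smul_dot (X U w : V3) (t : ℝ) :
    dot3 (X + t • U) w = dot3 X w + t * dot3 U w := by
  simp [dot3, Fin.sum_univ_three]; ring

lemma lamSet_zero (r s p : ℝ) : lamSet r s p 0 = Krs r s p := rfl

lemma mem_lamSet_succ_of {r s p : ℝ} {z : Z} {i : ℕ} (zb : Z) (hzb : zb ∈ waveCone)
    (t₁ t₂ : ℝ) (h1 : t₁ ≤ 0) (h2 : 0 ≤ t₂) (m1 : z + t₁ • zb ∈ lamSet r s p i)
    (m2 : z + t₂ • zb ∈ lamSet r s p i) : z ∈ lamSet r s p (i + 1) :=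
  ⟨zb, hzb, t₁, t₂, h1, h2, m1, m2⟩

lemma zero_mem_waveCone : (0 : Z) ∈ waveCone := by
  refine ⟨![1, 0, 0], 0, ?_, ?_, ?_, ?_, ?_⟩
  · intro h
    have := congrFun h 0
    simp at this
  · show (0 : Mat3) *ᵥ _ + (0:ℝ) • (0 : V3) = 0
    simp
  · show (0 : Mat3)ᵀ *ᵥ _ + (0:ℝ) • (0 : V3) = 0
    simp
  · show dot3 (0 : V3) _ = 0
    simp [dot3]
  · show dot3 (0 : V3) _ = 0
    simp [dot3]

lemma lamSet_mono {r s p : ℝ} {i : ℕ} : lamSet r s p i ⊆ lamSet r s p (i + 1) := by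
  intro z hz
  refine mem_lamSet_succ_of 0 zero_mem_waveCone 0 0 le_rfl le_rfl ?_ ?_ <;>
    simpa using hz


lemma memK (r s p : ℝ) (hr : 0 < r) (hs : 0 < s) (A B : V3) (N : Mat3)
    (hN : N = outer A B + p • (1 : Mat3))
    (hA : dot3 A A = r ^ 2) (hB : dot3 B B = s ^ 2) :
    ((A, B, N) : Z) ∈ Krs r s p :=
  ⟨hN, norm3_eq_of A r hr.le hA, norm3_eq_of B s hs.le hB⟩

lemma dir_mem_waveCone (A B u v : V3) (l : ℝ)
    (hcop : dot3 (A - B) (crossProduct u v) = 0) :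
    ((u, v, outer u B + outer A v + l • outer u v) : Z) ∈ waveCone := by
  obtain ⟨ξ, hξ0, hu, hv, hw⟩ := exists_xi u v (A - B) hcop
  refine ⟨ξ, -dot3 B ξ, hξ0, ?_, ?_, hu, hv⟩
  · show (outer u B + outer A v + l • outer u v) *ᵥ ξ + (-dot3 B ξ) • u = 0
    rw [Matrix.add_mulVec, Matrix.add_mulVec, Matrix.smul_mulVec,
      outer_mulVec, outer_mulVec, outer_mulVec, hv]
    simp [neg_smul]
  · show (outer u B + outer A v + l • outer u v)ᵀ *ᵥ ξ + (-dot3 B ξ) • v = 0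
    rw [Matrix.transpose_add, Matrix.transpose_add, Matrix.transpose_smul,
      outer_transpose, outer_transpose, outer_transpose,
      Matrix.add_mulVec, Matrix.add_mulVec, Matrix.smul_mulVec,
      outer_mulVec, outer_mulVec, outer_mulVec, hu]
    have hAB : dot3 A ξ = dot3 B ξ := by
      have := dot3_sub_left A B ξ
      rw [hw] at this; linarith
    rw [hAB]
    simp [neg_smul]

lemma lemA (r s p : ℝ) (hr : 0 < r) (hs : 0 < s) (A B u v : V3) (N : Mat3)
    (hN : N = outer A B + p • (1 : Mat3) + outer u v)
    (hu2 : dot3 u u = r ^ 2 - dot3 A A) (hv2 : dot3 v v = s ^ 2 - dot3 B B)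
    (hu0 : 0 < dot3 u u) (hv0 : 0 < dot3 v v)
    (hmu : dot3 A u * dot3 v v = dot3 B v * dot3 u u)
    (hcop : dot3 (A - B) (crossProduct u v) = 0) :
    ((A, B, N) : Z) ∈ lamSet r s p 1 := by
  set a2 := dot3 u u with ha2
  set b2 := dot3 v v with hb2
  set μ := dot3 A u / a2 with hμ
  have hAu : dot3 A u = μ * a2 := by
    rw [hμ]; field_simp
  have hBv : dot3 B v = μ * b2 := by
    have h' : dot3 B v * a2 = μ * b2 * a2 := by
      rw [← hmu, hAu]; ring
    exact mul_right_cancel₀ (ne_of_gt hu0) h'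
  set D := Real.sqrt (μ ^ 2 + 1) with hD
  have hD2 : D ^ 2 = μ ^ 2 + 1 := Real.sq_sqrt (by positivity)
  have hD0 : 0 ≤ D := Real.sqrt_nonneg _
  set W : Mat3 := outer u B + outer A v + (-(2 * μ)) • outer u v with hW
  set zb : Z := (u, v, W) with hzb
  have key : ∀ t : ℝ, t ^ 2 + 2 * μ * t - 1 = 0 →
      ((A, B, N) : Z) + t • zb ∈ Krs r s p := by
    intro t ht
    have hpt : ((A, B, N) : Z) + t • zb = ((A + t • u, B + t • v, N + t • W) : Z) := rfl
    rw [hpt]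
    refine memK r s p hr hs _ _ _ ?_ ?_ ?_
    · ext i j
      simp only [hN, hW, Matrix.add_apply, Matrix.smul_apply, outer_apply,
        smul_eq_mul, Pi.add_apply, Pi.smul_apply, Matrix.neg_apply]
      ring_nf
      linear_combination (-(u i * v j)) * ht
    · rw [dot3_expand, hAu]
      linear_combination a2 * ht + hu2
    · rw [dot3_expand, hBv]
      linear_combination b2 * ht + hv2
  have hroot1 : (-μ - D) ^ 2 + 2 * μ * (-μ - D) - 1 = 0 := by linear_combination hD2
  have hroot2 : (-μ + D) ^ 2 + 2 * μ * (-μ + D) - 1 = 0 := by linear_combination hD2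
  have ht1 : -μ - D ≤ 0 := by nlinarith [hD2, hD0]
  have ht2 : 0 ≤ -μ + D := by nlinarith [hD2, hD0]
  exact mem_lamSet_succ_of zb (dir_mem_waveCone A B u v (-(2 * μ)) hcop)
    (-μ - D) (-μ + D) ht1 ht2 (key _ hroot1) (key _ hroot2)

lemma dot3_cross_self₁ (u v : V3) : dot3 u (crossProduct u v) = 0 := by
  rw [dot3_cross]; ring

lemma dot3_cross_self₂ (u v : V3) : dot3 v (crossProduct u v) = 0 := by
  rw [dot3_cross]; ring

set_option maxHeartbeats 2000000 in
lemma lemB (r s p θ : ℝ) (hr : 0 < r) (hs : 0 < s) (A B u v : V3) (N : Mat3)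
    (hN : N = outer A B + p • (1 : Mat3) + θ • outer u v)
    (hu2 : dot3 u u = r ^ 2 - dot3 A A) (hv2 : dot3 v v = s ^ 2 - dot3 B B)
    (hu0 : 0 < dot3 u u) (hv0 : 0 < dot3 v v)
    (hmu : dot3 A u * dot3 v v = dot3 B v * dot3 u u)
    (hcop : dot3 (A - B) (crossProduct u v) = 0)
    (hθ0 : 0 < θ) (hθ1 : θ < 1) (hAu0 : dot3 A u ≠ 0) :
    ((A, B, N) : Z) ∈ lamSet r s p 2 := by
  set a2 := dot3 u u with ha2
  set b2 := dot3 v v with hb2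
  set μ := dot3 A u / a2 with hμ
  have hμne : μ ≠ 0 := div_ne_zero hAu0 (ne_of_gt hu0)
  have hAu : dot3 A u = μ * a2 := by rw [hμ]; field_simp
  have hBv : dot3 B v = μ * b2 := by
    have h' : dot3 B v * a2 = μ * b2 * a2 := by rw [← hmu, hAu]; ring
    exact mul_right_cancel₀ (ne_of_gt hu0) h'
  set lam := (1 + θ) / μ with hlamdef
  have hlam : μ * lam = 1 + θ := by rw [hlamdef]; field_simp
  set W : Mat3 := outer u B + outer A v + lam • outer u v with hW
  set zb : Z := (u, v, W) with hzb
  have hwc := dir_mem_waveCone A B u v lam hcop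
  have hcross1 := dot3_cross_self₁ u v
  have hcross2 := dot3_cross_self₂ u v
  have hABc : dot3 A (crossProduct u v) - dot3 B (crossProduct u v) = 0 := by
    rw [← dot3_sub_left]; exact hcop
  -- endpoint at t = -μ
  have end_o : ((A, B, N) : Z) + (-μ) • zb ∈ lamSet r s p 1 := by
    have hpt : ((A, B, N) : Z) + (-μ) • zb
        = ((A + (-μ) • u, B + (-μ) • v, N + (-μ) • W) : Z) := rfl
    rw [hpt]
    set x := Real.sqrt (1 + μ ^ 2) with hx
    have hx2 : x ^ 2 = 1 + μ ^ 2 := Real.sq_sqrt (by positivity)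
    have hx0 : 0 < x := Real.sqrt_pos.mpr (by positivity)
    refine lemA r s p hr hs _ _ (x • u) ((-x) • v) _ ?_ ?_ ?_ ?_ ?_ ?_ ?_
    · ext i j
      simp only [hN, hW, Matrix.add_apply, Matrix.smul_apply, outer_apply,
        smul_eq_mul, Pi.add_apply, Pi.smul_apply]
      ring_nf
      linear_combination (u i * v j) * hx2 - (u i * v j) * hlam
    · rw [dot3_smul_left, dot3_smul_right, dot3_expand, hAu]
      linear_combination a2 * hx2 + hu2
    · rw [dot3_smul_left, dot3_smul_right, dot3_expand, hBv]
      linear_combination b2 * hx2 + hv2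
    · rw [dot3_smul_left, dot3_smul_right]
      exact mul_pos hx0 (mul_pos hx0 hu0)
    · rw [dot3_smul_left, dot3_smul_right]
      nlinarith [mul_pos hx0 (mul_pos hx0 hv0)]
    · have hA'u : dot3 (A + (-μ) • u) u = 0 := by
        rw [dot3_add_smul_dot, hAu]; ring
      have hB'v : dot3 (B + (-μ) • v) v = 0 := by
        rw [dot3_add_smul_dot, hBv]; ring
      simp only [dot3_smul_left, dot3_smul_right, hA'u, hB'v]
      ring
    · rw [cross_smul_smul, dot3_smul_right, dot3_sub_left,
        dot3_add_smul_dot, dot3_add_smul_dot, hcross1, hcross2]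
      linear_combination (x * -x) * hABc
  -- endpoint at t = ts
  set J := 1 + θ + 2 * μ ^ 2 with hJ
  have hJ0 : 0 < J := by nlinarith [sq_nonneg μ]
  set ts := (1 - θ) * μ / J with hts
  have htskey : ts * (lam + 2 * μ) = 1 - θ := by
    rw [hts, hlamdef, hJ]; field_simp
  have hQpos : 0 < 1 - 2 * μ * ts - ts ^ 2 := by
    have hQval : 1 - 2 * μ * ts - ts ^ 2
        = ((1 + θ) ^ 2 + μ ^ 2 * (1 + 6 * θ + θ ^ 2) + 4 * μ ^ 4 * θ) / J ^ 2 := by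
      rw [hts, hJ]; field_simp; ring
    have hnum : 0 < (1 + θ) ^ 2 + μ ^ 2 * (1 + 6 * θ + θ ^ 2) + 4 * μ ^ 4 * θ := by
      nlinarith [sq_nonneg μ, sq_nonneg (μ ^ 2), sq_nonneg (1 + θ)]
    rw [hQval]
    exact div_pos hnum (by positivity)
  have end_s : ((A, B, N) : Z) + ts • zb ∈ lamSet r s p 1 := by
    have hpt : ((A, B, N) : Z) + ts • zb
        = ((A + ts • u, B + ts • v, N + ts • W) : Z) := rfl
    rw [hpt]
    set x := Real.sqrt (1 - 2 * μ * ts - ts ^ 2) with hx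
    have hx2 : x ^ 2 = 1 - 2 * μ * ts - ts ^ 2 := Real.sq_sqrt hQpos.le
    have hx0 : 0 < x := Real.sqrt_pos.mpr hQpos
    refine lemA r s p hr hs _ _ (x • u) (x • v) _ ?_ ?_ ?_ ?_ ?_ ?_ ?_
    · ext i j
      simp only [hN, hW, Matrix.add_apply, Matrix.smul_apply, outer_apply,
        smul_eq_mul, Pi.add_apply, Pi.smul_apply]
      ring_nf
      linear_combination (u i * v j) * htskey - (u i * v j) * hx2
    · rw [dot3_smul_left, dot3_smul_right, dot3_expand, hAu]
      linear_combination a2 * hx2 + hu2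
    · rw [dot3_smul_left, dot3_smul_right, dot3_expand, hBv]
      linear_combination b2 * hx2 + hv2
    · rw [dot3_smul_left, dot3_smul_right]
      exact mul_pos hx0 (mul_pos hx0 hu0)
    · rw [dot3_smul_left, dot3_smul_right]
      exact mul_pos hx0 (mul_pos hx0 hv0)
    · have haA : dot3 (A + ts • u) u = μ * a2 + ts * a2 := by
        rw [dot3_add_smul_dot, hAu]
      have hbB : dot3 (B + ts • v) v = μ * b2 + ts * b2 := by
        rw [dot3_add_smul_dot, hBv]
      simp only [dot3_smul_left, dot3_smul_right, haA, hbB]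
      ring
    · rw [cross_smul_smul, dot3_smul_right, dot3_sub_left,
        dot3_add_smul_dot, dot3_add_smul_dot, hcross1, hcross2]
      linear_combination (x * x) * hABc
  rcases hμne.lt_or_gt with hneg | hpos
  · have hts1 : ts ≤ 0 := by
      rw [hts]
      apply div_nonpos_of_nonpos_of_nonneg
      · nlinarith
      · exact hJ0.le
    exact mem_lamSet_succ_of zb hwc ts (-μ) hts1 (by linarith) end_s end_o
  · have hts2 : 0 ≤ ts := by
      rw [hts]
      apply div_nonneg
      · nlinarith
      · exact hJ0.le
    exact mem_lamSet_succ_of zb hwc (-μ) ts (by linarith) hts2 end_o end_s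

lemma outer_smul_smul (c d : ℝ) (a b : V3) :
    outer (c • a) (d • b) = (c * d) • outer a b := by
  ext i j
  simp [outer, Matrix.vecMulVec_apply, Pi.smul_apply, smul_eq_mul, Matrix.smul_apply]
  ring

end SAux

open SAux in
set_option maxHeartbeats 2000000 in
theorem stmt5 (r s p : ℝ) (hr : 0 < r) (hs : 0 < s) (z : Z)
    (hp : |p| ≤ r * s) (hα : norm3 z.1 < r) (hβ : norm3 z.2.1 < s)
    (h : ∃ (c : ℝ) (a b : V3), 0 < c ∧ c ≤ Gfun r s z ∧ a ≠ 0 ∧ b ≠ 0 ∧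
      M0 p z + c • outer ((norm3 a)⁻¹ • a) ((norm3 b)⁻¹ • b) = 0 ∧
      dot3 z.2.1 b * ((r ^ 2 - norm3 z.1 ^ 2) / (s ^ 2 - norm3 z.2.1 ^ 2)) = dot3 z.1 a ∧
      (r ^ 2 - norm3 z.1 ^ 2) / (s ^ 2 - norm3 z.2.1 ^ 2) = norm3 a ^ 2 / norm3 b ^ 2 ∧
      dot3 (z.1 - z.2.1) (crossProduct a b) = 0) :
    z ∈ lamSet r s p 3 := by
  obtain ⟨c, a, b, hc0, hcG, ha0, hb0, hM0eq, hii1, hii2, hiii⟩ := h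
  obtain ⟨α, β, M⟩ := z
  dsimp only at hα hβ hM0eq hii1 hii2 hiii
  rw [norm3_sq α, norm3_sq β] at hii1 hii2
  rw [norm3_sq a, norm3_sq b] at hii2
  -- basic positivity
  have hda : dot3 α α < r ^ 2 := by
    have h1 : norm3 α ^ 2 < r ^ 2 := by nlinarith [norm3_nonneg α]
    rwa [norm3_sq] at h1
  have hdb : dot3 β β < s ^ 2 := by
    have h1 : norm3 β ^ 2 < s ^ 2 := by nlinarith [norm3_nonneg β]
    rwa [norm3_sq] at h1
  obtain ⟨a2, ha2def⟩ : ∃ a2 : ℝ, a2 = r ^ 2 - dot3 α α := ⟨_, rfl⟩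
  obtain ⟨b2, hb2def⟩ : ∃ b2 : ℝ, b2 = s ^ 2 - dot3 β β := ⟨_, rfl⟩
  rw [← ha2def, ← hb2def] at hii1 hii2
  have ha2pos : 0 < a2 := by rw [ha2def]; linarith
  have hb2pos : 0 < b2 := by rw [hb2def]; linarith
  have hdaa : 0 < dot3 a a := dot3_self_pos a ha0
  have hdbb : 0 < dot3 b b := dot3_self_pos b hb0
  have hna0 : 0 < norm3 a := norm3_pos a ha0
  have hnb0 : 0 < norm3 b := norm3_pos b hb0
  -- scalings
  obtain ⟨ca, hcadef⟩ : ∃ ca : ℝ, ca = Real.sqrt a2 / norm3 a := ⟨_, rfl⟩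
  obtain ⟨cb, hcbdef⟩ : ∃ cb : ℝ, cb = Real.sqrt b2 / norm3 b := ⟨_, rfl⟩
  have hsa2 : Real.sqrt a2 ^ 2 = a2 := Real.sq_sqrt ha2pos.le
  have hsb2 : Real.sqrt b2 ^ 2 = b2 := Real.sq_sqrt hb2pos.le
  have hsa0 : 0 < Real.sqrt a2 := Real.sqrt_pos.mpr ha2pos
  have hsb0 : 0 < Real.sqrt b2 := Real.sqrt_pos.mpr hb2pos
  have hca0 : 0 < ca := by rw [hcadef]; exact div_pos hsa0 hna0
  have hcb0 : 0 < cb := by rw [hcbdef]; exact div_pos hsb0 hnb0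
  have hcross : a2 * dot3 b b = dot3 a a * b2 := by
    rw [div_eq_div_iff (by linarith) (by linarith)] at hii2
    exact hii2
  have hccb : ca = cb := by
    rw [hcadef, hcbdef, div_eq_div_iff (ne_of_gt hna0) (ne_of_gt hnb0)]
    have h1 : Real.sqrt (a2 * dot3 b b) = Real.sqrt (dot3 a a * b2) := by rw [hcross]
    rw [Real.sqrt_mul ha2pos.le, Real.sqrt_mul hdaa.le] at h1
    rw [norm3, norm3]
    linear_combination h1
  obtain ⟨u, hudef⟩ : ∃ u : V3, u = ca • a := ⟨_, rfl⟩
  obtain ⟨v, hvdef⟩ : ∃ v : V3, v = cb • b := ⟨_, rfl⟩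
  have hcana : ca * norm3 a = Real.sqrt a2 := by
    rw [hcadef]; field_simp
  have hcbnb : cb * norm3 b = Real.sqrt b2 := by
    rw [hcbdef]; field_simp
  have huu : dot3 u u = a2 := by
    rw [hudef, dot3_smul_left, dot3_smul_right, ← norm3_sq a]
    linear_combination (ca * norm3 a + Real.sqrt a2) * hcana + hsa2
  have hvv : dot3 v v = b2 := by
    rw [hvdef, dot3_smul_left, dot3_smul_right, ← norm3_sq b]
    linear_combination (cb * norm3 b + Real.sqrt b2) * hcbnb + hsb2
  -- mu matching
  have hii1' : dot3 β b * a2 = dot3 α a * b2 := by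
    rw [← mul_div_assoc, div_eq_iff (ne_of_gt hb2pos)] at hii1
    exact hii1
  have hmu_u : dot3 α u * dot3 v v = dot3 β v * dot3 u u := by
    rw [huu, hvv, hudef, hvdef, dot3_smul_right, dot3_smul_right, ← hccb]
    linear_combination (-ca) * hii1'
  -- coplanarity
  have hcop_u : dot3 (α - β) (crossProduct u v) = 0 := by
    rw [hudef, hvdef, cross_smul_smul, dot3_smul_right, hiii, mul_zero]
  -- theta
  have hsab0 : 0 < Real.sqrt (a2 * b2) := Real.sqrt_pos.mpr (by positivity)
  obtain ⟨θ, hθdef⟩ : ∃ θ : ℝ, θ = c / Real.sqrt (a2 * b2) := ⟨_, rfl⟩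
  have hθ0 : 0 < θ := by rw [hθdef]; exact div_pos hc0 hsab0
  have hG : Gfun r s ((α, β, M) : Z) = Real.sqrt (a2 * b2) := by
    unfold Gfun
    rw [norm3_sq α, norm3_sq β, ← ha2def, ← hb2def]
  have hθle1 : θ ≤ 1 := by
    rw [hθdef, div_le_one hsab0]
    rw [hG] at hcG
    exact hcG
  -- M equation
  have hM : M = outer α β + p • (1 : Mat3) + θ • outer u v := by
    have e1 : c • outer ((norm3 a)⁻¹ • a) ((norm3 b)⁻¹ • b)
        = (c * ((norm3 a)⁻¹ * (norm3 b)⁻¹)) • outer a b := by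
      rw [outer_smul_smul, smul_smul]
    have e2 : θ • outer u v = (θ * (ca * cb)) • outer a b := by
      rw [hudef, hvdef, outer_smul_smul, smul_smul]
    have hcoef : c * ((norm3 a)⁻¹ * (norm3 b)⁻¹) = θ * (ca * cb) := by
      rw [hθdef, hcadef, hcbdef, Real.sqrt_mul ha2pos.le]
      field_simp
    have h0 := hM0eq
    unfold M0 at h0
    dsimp only at h0
    rw [e1, hcoef, ← e2] at h0
    have h1 : (outer α β + p • (1 : Mat3) + θ • outer u v) - M = 0 := by
      rw [← h0]; abel
    exact (sub_eq_zero.mp h1).symm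
  -- helpers for cross terms
  have hcross1 := dot3_cross_self₁ u v
  have hcross2 := dot3_cross_self₂ u v
  have hABc_u : dot3 α (crossProduct u v) - dot3 β (crossProduct u v) = 0 := by
    rw [← dot3_sub_left]; exact hcop_u
  have hu2main : dot3 u u = r ^ 2 - dot3 α α := by rw [huu, ha2def]
  have hv2main : dot3 v v = s ^ 2 - dot3 β β := by rw [hvv, hb2def]
  have hu0main : 0 < dot3 u u := by rw [huu]; exact ha2pos
  have hv0main : 0 < dot3 v v := by rw [hvv]; exact hb2pos
  rcases eq_or_lt_of_le hθle1 with hθ1 | hθ1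
  · -- θ = 1 : one-step
    have h1 : ((α, β, M) : Z) ∈ lamSet r s p 1 := by
      refine lemA r s p hr hs α β u v M ?_ hu2main hv2main hu0main hv0main hmu_u hcop_u
      rw [hM, hθ1, one_smul]
    exact lamSet_mono (lamSet_mono h1)
  · -- θ < 1 : two-step split
    obtain ⟨μa, hμadef⟩ : ∃ μa : ℝ, μa = dot3 α u := ⟨_, rfl⟩
    obtain ⟨m', hm'def⟩ : ∃ m' : ℝ, m' = |μa| := ⟨_, rfl⟩
    have hm'0 : 0 ≤ m' := hm'def ▸ abs_nonneg _
    have hω : 0 < 1 - θ := by linarith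
    obtain ⟨y, hydef⟩ : ∃ y : ℝ, y = (1 - θ) * a2 / (2 * m' + 1) := ⟨_, rfl⟩
    have hy0 : 0 < y := by
      rw [hydef]
      exact div_pos (mul_pos hω ha2pos) (by linarith)
    obtain ⟨τ0, hτ0def⟩ : ∃ τ0 : ℝ, τ0 = min (Real.sqrt θ) y / 2 := ⟨_, rfl⟩
    have hτ00 : 0 < τ0 := by
      rw [hτ0def]
      have := lt_min (Real.sqrt_pos.mpr hθ0) hy0
      linarith
    -- main construction, parametric in the splitting size τ
    have main : ∀ τ : ℝ, 0 < τ → τ ≤ τ0 → τ * a2 ≠ m' →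
        ((α, β, M) : Z) ∈ lamSet r s p 3 := by
      intro τ hτpos hτle hτne
      have hτsθ : τ < Real.sqrt θ := by
        have h1 : τ0 ≤ Real.sqrt θ / 2 := by
          rw [hτ0def]
          have := min_le_left (Real.sqrt θ) y
          linarith
        have := Real.sqrt_pos.mpr hθ0
        linarith
      have hτθ : τ ^ 2 < θ := by
        have h1 : τ * τ < Real.sqrt θ * Real.sqrt θ :=
          mul_self_lt_mul_self hτpos.le hτsθ
        have h2 : Real.sqrt θ * Real.sqrt θ = θ := Real.mul_self_sqrt hθ0.le
        rw [pow_two]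
        linarith
      have hbd : 2 * (τ * m') < (1 - θ) * a2 := by
        have h1 : τ ≤ y / 2 := by
          rw [hτ0def] at hτle
          have := min_le_right (Real.sqrt θ) y
          linarith
        have hd : y * (2 * m' + 1) = (1 - θ) * a2 := by
          rw [hydef]; field_simp
        have h2 : τ * (2 * m' + 1) ≤ y / 2 * (2 * m' + 1) :=
          mul_le_mul_of_nonneg_right h1 (by linarith)
        have h3 : τ * (2 * m' + 1) = 2 * (τ * m') + τ := by ring
        have h4 : y / 2 * (2 * m' + 1) = y * (2 * m' + 1) / 2 := by ring
        have h5 : 0 < (1 - θ) * a2 := mul_pos hω ha2pos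
        linarith
      obtain ⟨W, hWdef⟩ : ∃ W : Mat3, W = outer u β + outer α v + (0:ℝ) • outer u v :=
        ⟨_, rfl⟩
      have hwc : ((u, v, W) : Z) ∈ waveCone := by
        rw [hWdef]; exact dir_mem_waveCone α β u v 0 hcop_u
      -- generic endpoint
      have keyend : ∀ t : ℝ, t ^ 2 = τ ^ 2 → dot3 α u + t * a2 ≠ 0 →
          2 * (t * μa) < (1 - θ) * a2 →
          ((α, β, M) : Z) + t • ((u, v, W) : Z) ∈ lamSet r s p 2 := by
        intro t ht2 hne htbd
        have hpt : ((α, β, M) : Z) + t • ((u, v, W) : Z)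
            = ((α + t • u, β + t • v, M + t • W) : Z) := rfl
        rw [hpt]
        have ha2' : r ^ 2 - dot3 (α + t • u) (α + t • u)
            = a2 - 2 * t * μa - τ ^ 2 * a2 := by
          rw [dot3_expand, huu, ← hμadef]
          linear_combination (-1 : ℝ) * ha2def - a2 * ht2
        have ha2'pos : 0 < a2 - 2 * t * μa - τ ^ 2 * a2 := by
          have h1 : 0 < (θ - τ ^ 2) * a2 := mul_pos (by linarith) ha2pos
          have h2 : (θ - τ ^ 2) * a2 = θ * a2 - τ ^ 2 * a2 := by ring
          have h3 : (1 - θ) * a2 = a2 - θ * a2 := by ring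
          have h4 : 2 * (t * μa) = 2 * t * μa := by ring
          linarith
        obtain ⟨x, hxdef⟩ : ∃ x : ℝ, x = Real.sqrt ((a2 - 2 * t * μa - τ ^ 2 * a2) / a2) :=
          ⟨_, rfl⟩
        have hx2 : x ^ 2 = (a2 - 2 * t * μa - τ ^ 2 * a2) / a2 := by
          rw [hxdef]; exact Real.sq_sqrt (by positivity)
        have hx0 : 0 < x := by
          rw [hxdef]; exact Real.sqrt_pos.mpr (by positivity)
        have hxa : x ^ 2 * a2 = a2 - 2 * t * μa - τ ^ 2 * a2 := by
          rw [hx2]; field_simp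
        obtain ⟨θe, hθedef⟩ :
            ∃ θe : ℝ, θe = (θ - τ ^ 2) * a2 / (a2 - 2 * t * μa - τ ^ 2 * a2) := ⟨_, rfl⟩
        have hθex : θe * x ^ 2 = θ - τ ^ 2 := by
          rw [hθedef, hx2]
          field_simp
        have hθe0 : 0 < θe := by
          rw [hθedef]
          exact div_pos (mul_pos (by linarith) ha2pos) ha2'pos
        have hθe1 : θe < 1 := by
          rw [hθedef, div_lt_one ha2'pos]
          have h2 : (θ - τ ^ 2) * a2 = θ * a2 - τ ^ 2 * a2 := by ring
          have h3 : (1 - θ) * a2 = a2 - θ * a2 := by ring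
          have h4 : 2 * (t * μa) = 2 * t * μa := by ring
          linarith
        refine lemB r s p θe hr hs (α + t • u) (β + t • v) (x • u) (x • v) (M + t • W)
          ?_ ?_ ?_ ?_ ?_ ?_ ?_ hθe0 hθe1 ?_
        · ext i j
          simp only [hM, hWdef, Matrix.add_apply, Matrix.smul_apply, outer_apply,
            smul_eq_mul, Pi.add_apply, Pi.smul_apply]
          ring_nf
          linear_combination (-(u i * v j)) * hθex - (u i * v j) * ht2
        · rw [dot3_smul_left, dot3_smul_right, huu, ha2']
          linear_combination hxa
        · -- dot3 (x•v) (x•v) = s^2 - dot3 (β + t•v) (β + t•v)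
          rw [dot3_smul_left, dot3_smul_right, hvv, dot3_expand, hvv]
          have hm := hmu_u
          rw [huu, hvv, ← hμadef] at hm
          have hb2' : (a2 - 2 * t * μa - τ ^ 2 * a2) * b2
              = (b2 - 2 * t * dot3 β v - τ ^ 2 * b2) * a2 := by
            linear_combination (-2 * t) * hm
          have hxb : x ^ 2 * b2 = b2 - 2 * t * dot3 β v - τ ^ 2 * b2 := by
            rw [hx2, div_mul_eq_mul_div, div_eq_iff (ne_of_gt ha2pos), hb2']
          linear_combination hxb + b2 * ht2 + hb2def
        · rw [dot3_smul_left, dot3_smul_right, huu]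
          exact mul_pos hx0 (mul_pos hx0 ha2pos)
        · rw [dot3_smul_left, dot3_smul_right, hvv]
          exact mul_pos hx0 (mul_pos hx0 hb2pos)
        · -- mu matching at endpoint
          simp only [dot3_smul_left, dot3_smul_right, dot3_add_smul_dot, huu, hvv]
          have hm := hmu_u
          rw [huu, hvv] at hm
          linear_combination (x ^ 3) * hm
        · rw [cross_smul_smul, dot3_smul_right, dot3_sub_left,
            dot3_add_smul_dot, dot3_add_smul_dot, hcross1, hcross2]
          linear_combination (x * x) * hABc_u
        · simp only [dot3_add_smul_dot, dot3_smul_right, huu]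
          exact mul_ne_zero (ne_of_gt hx0) hne
      -- endpoints
      have habs1 : dot3 α u + τ * a2 ≠ 0 := by
        intro hcon
        apply hτne
        rw [hm'def, hμadef]
        have he : dot3 α u = -(τ * a2) := by linarith
        rw [he, abs_neg, abs_of_pos (by positivity)]
      have habs2 : dot3 α u + (-τ) * a2 ≠ 0 := by
        intro hcon
        apply hτne
        rw [hm'def, hμadef]
        have he : dot3 α u = τ * a2 := by linarith
        rw [he, abs_of_pos (by positivity)]
      have hbd1 : 2 * (τ * μa) < (1 - θ) * a2 := by
        have h1 : τ * μa ≤ τ * m' := by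
          rw [hm'def]
          exact mul_le_mul_of_nonneg_left (le_abs_self μa) hτpos.le
        linarith
      have hbd2 : 2 * ((-τ) * μa) < (1 - θ) * a2 := by
        have h2 : -μa ≤ m' := by rw [hm'def]; exact neg_le_abs μa
        have h3 := mul_le_mul_of_nonneg_left h2 hτpos.le
        have h4 : τ * -μa = -τ * μa := by ring
        linarith
      exact mem_lamSet_succ_of ((u, v, W) : Z) hwc (-τ) τ (by linarith) (by linarith)
        (keyend (-τ) (by ring) habs2 hbd2) (keyend τ rfl habs1 hbd1)
    rcases eq_or_ne (τ0 * a2) m' with hcol | hcol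
    · refine main (τ0 / 2) (by linarith) (by linarith) ?_
      intro hcon
      have he : τ0 / 2 * a2 = τ0 * a2 / 2 := by ring
      have := mul_pos hτ00 ha2pos
      rw [he, hcol] at hcon
      linarith
    · exact main τ0 hτ00 le_rfl hcol
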